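/- arXiv:0810.4916 — 7 statements merged into one kernel-verified Lean document; each statement's English description precedes it below -/
import Mathlib

section
/- Let Λ be a finite set partitioned into nonempty disjoint subsets Λ₁ and Λ₂, and let q₁, q₂ ∈ [0,1]. Define ℓ₁ = q₁(log₂|Λ₁| + 1) + (1 - q₁)(log₂|Λ₂| + 1) and ℓ₂ = q₂(log₂|Λ₂| + 1) + (1 - q₂)(log₂|Λ₁| + 1). If (q₁ - 1/2)(q₂ - 1/2) ≥ 0, then min(ℓ₁, ℓ₂) ≤ log₂|Λ|. -/
open Real

/-- Lemma 2 of the paper (non-special node): if `Λ` is partitioned into nonempty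
disjoint `Λ₁, Λ₂`, `q₁, q₂ ∈ [0,1]` and `(q₁ - 1/2)(q₂ - 1/2) ≥ 0`, then
`min ℓ₁ ℓ₂ ≤ log₂ |Λ|`, where
`ℓ₁ = q₁(log₂|Λ₁| + 1) + (1 - q₁)(log₂|Λ₂| + 1)` and
`ℓ₂ = q₂(log₂|Λ₂| + 1) + (1 - q₂)(log₂|Λ₁| + 1)`. -/
theorem huffman_nonspecial_node (Λ Λ₁ Λ₂ : Finset ℕ) (q₁ q₂ : ℝ)
    (h₁ : Λ₁.Nonempty) (h₂ : Λ₂.Nonempty) (hdisj : Disjoint Λ₁ Λ₂)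
    (hunion : Λ₁ ∪ Λ₂ = Λ)
    (hq₁0 : 0 ≤ q₁) (hq₁1 : q₁ ≤ 1) (hq₂0 : 0 ≤ q₂) (hq₂1 : q₂ ≤ 1)
    (hns : (q₁ - 1 / 2) * (q₂ - 1 / 2) ≥ 0) :
    min (q₁ * (Real.logb 2 Λ₁.card + 1) + (1 - q₁) * (Real.logb 2 Λ₂.card + 1))
        (q₂ * (Real.logb 2 Λ₂.card + 1) + (1 - q₂) * (Real.logb 2 Λ₁.card + 1))
      ≤ Real.logb 2 Λ.card := by
  set a : ℝ := (Λ₁.card : ℝ) with ha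
  set b : ℝ := (Λ₂.card : ℝ) with hb
  have ha1 : (1 : ℝ) ≤ a := by
    rw [ha]; exact_mod_cast Finset.one_le_card.mpr h₁
  have hb1 : (1 : ℝ) ≤ b := by
    rw [hb]; exact_mod_cast Finset.one_le_card.mpr h₂
  have hcard : (Λ.card : ℝ) = a + b := by
    rw [← hunion, Finset.card_union_of_disjoint hdisj]
    push_cast; ring
  rw [hcard]
  set la := Real.logb 2 a with hla
  set lb := Real.logb 2 b with hlb
  -- average bound : (la + lb)/2 + 1 ≤ logb 2 (a+b)
  have havg : (la + lb) / 2 + 1 ≤ Real.logb 2 (a + b) := by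
    have h4ab : Real.logb 2 (4 * (a * b)) ≤ Real.logb 2 ((a + b) ^ 2) := by
      apply Real.logb_le_logb_of_le (by norm_num : (1:ℝ) < 2) (by positivity)
      nlinarith [sq_nonneg (a - b)]
    rw [Real.logb_mul (by norm_num) (by positivity), Real.logb_mul (by linarith) (by linarith),
      Real.logb_pow] at h4ab
    push_cast at h4ab
    have h4 : Real.logb 2 4 = 2 := by
      rw [show (4 : ℝ) = 2 ^ (2 : ℕ) by norm_num, Real.logb_pow, Real.logb_self_eq_one] <;>
        norm_num
    rw [h4] at h4ab
    rw [hla, hlb]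
    linarith
  -- min of the two lengths is at most the average
  have hkey : min (q₁ * (la + 1) + (1 - q₁) * (lb + 1))
      (q₂ * (lb + 1) + (1 - q₂) * (la + 1)) ≤ (la + lb) / 2 + 1 := by
    rcases le_or_gt ((q₁ - 1 / 2) * (la - lb)) 0 with h | h
    · refine le_trans (min_le_left _ _) ?_
      nlinarith
    · have hv0 : 0 ≤ (q₂ - 1 / 2) * (la - lb) := by
        nlinarith [mul_nonneg hns (sq_nonneg (la - lb))]
      refine le_trans (min_le_right _ _) ?_
      nlinarith
  exact hkey.trans havg
end

section
/- Let Λ be a finite set partitioned into nonempty disjoint subsets Λ₁ and Λ₂, and let q₁, q₂ ∈ [0,1]. Define ℓ₁ = q₁(log₂|Λ₁| + 1) + (1 - q₁)(log₂|Λ₂| + 1) and ℓ₂ = q₂(log₂|Λ₂| + 1) + (1 - q₂)(log₂|Λ₁| + 1). Then min(ℓ₁, ℓ₂) ≤ log₂|Λ| + 1. -/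
open Real

/-- Lemma 3 of the paper (arbitrary node): if `Λ` is partitioned into nonempty
disjoint `Λ₁, Λ₂` and `q₁, q₂ ∈ [0,1]`, then `min ℓ₁ ℓ₂ ≤ log₂ |Λ| + 1`, where
`ℓ₁ = q₁(log₂|Λ₁| + 1) + (1 - q₁)(log₂|Λ₂| + 1)` and
`ℓ₂ = q₂(log₂|Λ₂| + 1) + (1 - q₂)(log₂|Λ₁| + 1)`. -/
theorem huffman_general_node (Λ Λ₁ Λ₂ : Finset ℕ) (q₁ q₂ : ℝ)
    (h₁ : Λ₁.Nonempty) (h₂ : Λ₂.Nonempty) (hdisj : Disjoint Λ₁ Λ₂)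
    (hunion : Λ₁ ∪ Λ₂ = Λ)
    (hq₁0 : 0 ≤ q₁) (hq₁1 : q₁ ≤ 1) (hq₂0 : 0 ≤ q₂) (hq₂1 : q₂ ≤ 1) :
    min (q₁ * (Real.logb 2 Λ₁.card + 1) + (1 - q₁) * (Real.logb 2 Λ₂.card + 1))
        (q₂ * (Real.logb 2 Λ₂.card + 1) + (1 - q₂) * (Real.logb 2 Λ₁.card + 1))
      ≤ Real.logb 2 Λ.card + 1 := by
  have hs₁ : Λ₁ ⊆ Λ := hunion ▸ Finset.subset_union_left
  have hs₂ : Λ₂ ⊆ Λ := hunion ▸ Finset.subset_union_right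
  have hc₁ : (0:ℝ) < Λ₁.card := by exact_mod_cast Finset.card_pos.mpr h₁
  have hc₂ : (0:ℝ) < Λ₂.card := by exact_mod_cast Finset.card_pos.mpr h₂
  have hb₁ : Real.logb 2 Λ₁.card ≤ Real.logb 2 Λ.card :=
    Real.logb_le_logb_of_le (by norm_num) hc₁ (by exact_mod_cast Finset.card_le_card hs₁)
  have hb₂ : Real.logb 2 Λ₂.card ≤ Real.logb 2 Λ.card :=
    Real.logb_le_logb_of_le (by norm_num) hc₂ (by exact_mod_cast Finset.card_le_card hs₂)
  refine le_trans (min_le_left _ _) ?_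
  calc q₁ * (Real.logb 2 Λ₁.card + 1) + (1 - q₁) * (Real.logb 2 Λ₂.card + 1)
      ≤ q₁ * (Real.logb 2 Λ.card + 1) + (1 - q₁) * (Real.logb 2 Λ.card + 1) := by
        gcongr <;> linarith
    _ = Real.logb 2 Λ.card + 1 := by ring
end

section
/- Consider any full binary tree whose leaves are labeled by singletons and whose internal nodes Λ have children Λ₁, Λ₂ (disjoint, with union Λ), each node carrying a weight q(Λ₁) ∈ [0,1] for the probability of descending into Λ₁. Define the expected depth L(Λ) of a leaf reached by the random descent: L(Λ) = 0 if |Λ| = 1, and L(Λ) = q(Λ₁)(1 + L(Λ₁)) + (1 - q(Λ₁))(1 + L(Λ₂)) otherwise, where the descent at each internal node goes to the child Λ_i minimizing ℓ_i = q_i(log₂|Λ_i| + 1) + (1 - q_i)(log₂|Λ_j| + 1) (j ≠ i), with q_i = q(Λ_i). If at every internal node (q(Λ₁) - 1/2)(q(Λ₂) - 1/2) ≥ 0, then L(Λ) ≤ log₂|Λ| for the root Λ with |Λ| = n ≥ 2. -/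
open Real

/-- A full binary tree whose leaves are labeled by indices (singleton sets) and
whose internal nodes carry the probabilities `q₁ = q(Λ₁)`, `q₂ = q(Λ₂)` of their
two children; the random descent at an internal node goes into the left child
with probability `q₁`. -/
inductive HuffTree : Type
  | leaf (i : ℕ) : HuffTree
  | node (q₁ q₂ : ℝ) (l r : HuffTree) : HuffTree

namespace HuffTree

/-- The index set `Λ` of a (sub)tree. -/
def idxSet : HuffTree → Finset ℕ
  | leaf i => {i}
  | node _ _ l r => l.idxSet ∪ r.idxSet

/-- The expected cost `ℓ` of querying a child with probability weight `q`
whose sibling has the other cardinality: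
`ℓ = q(log₂|Λ₁| + 1) + (1-q)(log₂|Λ₂| + 1)`. -/
noncomputable def ell (q : ℝ) (c₁ c₂ : ℕ) : ℝ :=
  q * (Real.logb 2 c₁ + 1) + (1 - q) * (Real.logb 2 c₂ + 1)

/-- The expected depth of the leaf reached by the random descent:
`L = 0` on leaves and `L = q₁(1 + L(Λ₁)) + (1-q₁)(1 + L(Λ₂))` at internal nodes. -/
noncomputable def expDepth : HuffTree → ℝ
  | leaf _ => 0
  | node q₁ _ l r => q₁ * (1 + l.expDepth) + (1 - q₁) * (1 + r.expDepth)

/-- Well-formedness: at every internal node the children index sets are disjoint,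
the weights `q₁, q₂` lie in `[0,1]`, and the children are ordered so that the
descent queries the child minimizing `ℓᵢ = qᵢ(log₂|Λᵢ| + 1) + (1-qᵢ)(log₂|Λⱼ| + 1)`,
i.e. `ℓ₁ ≤ ℓ₂`. -/
def WF : HuffTree → Prop
  | leaf _ => True
  | node q₁ q₂ l r =>
      Disjoint l.idxSet r.idxSet ∧ 0 ≤ q₁ ∧ q₁ ≤ 1 ∧ 0 ≤ q₂ ∧ q₂ ≤ 1 ∧
      ell q₁ l.idxSet.card r.idxSet.card ≤ ell q₂ r.idxSet.card l.idxSet.card ∧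
      WF l ∧ WF r

/-- No node of the tree is special: at every internal node
`(q₁ - 1/2)(q₂ - 1/2) ≥ 0`. -/
def NoSpecial : HuffTree → Prop
  | leaf _ => True
  | node q₁ q₂ l r => (q₁ - 1 / 2) * (q₂ - 1 / 2) ≥ 0 ∧ NoSpecial l ∧ NoSpecial r

end HuffTree


private lemma huff_amgm_logb (x y : ℝ) (hx : 1 ≤ x) (hy : 1 ≤ y) :
    1 + (Real.logb 2 x + Real.logb 2 y) / 2 ≤ Real.logb 2 (x + y) := by
  have hx0 : 0 < x := by linarith
  have hy0 : 0 < y := by linarith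
  have hs0 : 0 < Real.sqrt (x * y) := Real.sqrt_pos.mpr (by positivity)
  have h1 : Real.logb 2 x + Real.logb 2 y = Real.logb 2 (x * y) :=
    (Real.logb_mul (ne_of_gt hx0) (ne_of_gt hy0)).symm
  have h2 : Real.logb 2 (Real.sqrt (x * y)) = Real.logb 2 (x * y) / 2 := by
    rw [Real.logb, Real.logb, Real.log_sqrt (by positivity)]
    ring
  have h3 : Real.logb 2 (2 * Real.sqrt (x * y)) = 1 + Real.logb 2 (x * y) / 2 := by
    rw [Real.logb_mul (by norm_num) (ne_of_gt hs0), h2,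
      Real.logb_self_eq_one (by norm_num : (1:ℝ) < 2)]
  have hsq : 2 * Real.sqrt (x * y) ≤ x + y := by
    nlinarith [Real.sq_sqrt (by positivity : (0:ℝ) ≤ x * y), Real.sqrt_nonneg (x*y),
      sq_nonneg (x - y), sq_nonneg (Real.sqrt (x*y) - x), sq_nonneg (Real.sqrt (x*y) - y)]
  calc 1 + (Real.logb 2 x + Real.logb 2 y) / 2
      = Real.logb 2 (2 * Real.sqrt (x * y)) := by rw [h1, h3]
    _ ≤ Real.logb 2 (x + y) := Real.logb_le_logb_of_le (by norm_num) (by positivity) hsq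

private lemma HuffTree.card_pos : ∀ t : HuffTree, 0 < t.idxSet.card := by
  intro t
  induction t with
  | leaf i => simp [HuffTree.idxSet]
  | node q₁ q₂ l r ihl ihr =>
    rw [Finset.card_pos] at ihl ⊢
    exact Finset.Nonempty.inl ihl

private lemma HuffTree.key : ∀ t : HuffTree, t.WF → t.NoSpecial →
    t.expDepth ≤ Real.logb 2 t.idxSet.card := by
  intro t
  induction t with
  | leaf i => intro _ _; simp [HuffTree.idxSet, HuffTree.expDepth]
  | node q₁ q₂ l r ihl ihr =>
    intro hwf hns
    obtain ⟨hd, hq10, hq11, hq20, hq21, hell, hwl, hwr⟩ := hwf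
    obtain ⟨hprod, hnl, hnr⟩ := hns
    have hc1 : 1 ≤ l.idxSet.card := l.card_pos
    have hc2 : 1 ≤ r.idxSet.card := r.card_pos
    have hx1 : (1:ℝ) ≤ (l.idxSet.card : ℝ) := by exact_mod_cast hc1
    have hy1 : (1:ℝ) ≤ (r.idxSet.card : ℝ) := by exact_mod_cast hc2
    set a := Real.logb 2 (l.idxSet.card : ℝ) with ha
    set b := Real.logb 2 (r.idxSet.card : ℝ) with hb
    have hL1 : l.expDepth ≤ a := ihl hwl hnl
    have hL2 : r.expDepth ≤ b := ihr hwr hnr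
    have hcard : ((HuffTree.node q₁ q₂ l r).idxSet.card : ℝ)
        = (l.idxSet.card : ℝ) + (r.idxSet.card : ℝ) := by
      rw [HuffTree.idxSet, Finset.card_union_of_disjoint hd]
      push_cast; ring
    -- step 1: expDepth ≤ ℓ₁
    have step1 : (HuffTree.node q₁ q₂ l r).expDepth ≤ q₁ * (a + 1) + (1 - q₁) * (b + 1) := by
      rw [HuffTree.expDepth]
      have h1 : q₁ * (1 + l.expDepth) ≤ q₁ * (1 + a) :=
        mul_le_mul_of_nonneg_left (by linarith) hq10
      have h2 : (1 - q₁) * (1 + r.expDepth) ≤ (1 - q₁) * (1 + b) :=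
        mul_le_mul_of_nonneg_left (by linarith) (by linarith)
      nlinarith
    -- step 2: ℓ₁ ≤ 1 + (a+b)/2
    have hell' : q₁ * (a + 1) + (1 - q₁) * (b + 1) ≤ q₂ * (b + 1) + (1 - q₂) * (a + 1) := hell
    have step2 : q₁ * (a + 1) + (1 - q₁) * (b + 1) ≤ 1 + (a + b) / 2 := by
      rcases le_or_gt (q₂ * (b + 1) + (1 - q₂) * (a + 1)) (1 + (a + b) / 2) with h | h
      · linarith
      · nlinarith [sq_nonneg (a - b)]
    have step3 : 1 + (a + b) / 2 ≤ Real.logb 2 ((HuffTree.node q₁ q₂ l r).idxSet.card : ℝ) := by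
      rw [hcard]
      exact huff_amgm_logb _ _ hx1 hy1
    linarith

/-- Lemma 4 of the paper: if the Huffman sampling tree has no special node, then
the expected number of samples needed to locate one nonzero component is at most
`log₂ n`, where `n = |Λ|` is the size of the root index set, `n ≥ 2`. -/
theorem huffman_expDepth_le_logb_of_noSpecial (t : HuffTree)
    (hwf : t.WF) (hns : t.NoSpecial) (hn : 2 ≤ t.idxSet.card) :
    t.expDepth ≤ Real.logb 2 t.idxSet.card := t.key hwf hns
end

section
/- With the same recursive setup for a full binary tree with leaf sets and descent probabilities as in Lemma 4, and assuming the tree has at most one special node (a node Λ with children Λ₁, Λ₂ such that (q(Λ₁) - 1/2)(q(Λ₂) - 1/2) < 0), the expected depth satisfies L(Λ) ≤ log₂|Λ| + 1 for the root Λ with |Λ| = n ≥ 2. -/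
open Real
set_option maxHeartbeats 1000000

namespace HuffTree

/-- The number of special nodes of the tree: an internal node with children
weights `q₁, q₂` is special if `(q₁ - 1/2)(q₂ - 1/2) < 0`. -/
noncomputable def specialCount : HuffTree → ℕ
  | leaf _ => 0
  | node q₁ q₂ l r =>
      (if (q₁ - 1 / 2) * (q₂ - 1 / 2) < 0 then 1 else 0)
        + specialCount l + specialCount r

lemma idxSet_nonempty (t : HuffTree) : t.idxSet.Nonempty := by
  induction t with
  | leaf i => exact ⟨i, by simp [idxSet]⟩
  | node q₁ q₂ l r ihl ihr =>
      exact ihl.mono (by simp [idxSet, Finset.subset_union_left])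

lemma one_le_card (t : HuffTree) : 1 ≤ t.idxSet.card :=
  Finset.card_pos.mpr t.idxSet_nonempty

/-- Key inequality at a non-special internal node: `ℓ₁ ≤ log₂(c₁+c₂)`. -/
lemma key_ineq (q₁ q₂ : ℝ) (c₁ c₂ : ℕ) (hc₁ : 1 ≤ c₁) (hc₂ : 1 ≤ c₂)
    (h0 : 0 ≤ q₁) (h1 : q₁ ≤ 1) (h0' : 0 ≤ q₂) (h1' : q₂ ≤ 1)
    (hord : ell q₁ c₁ c₂ ≤ ell q₂ c₂ c₁)
    (hns : ¬ (q₁ - 1/2) * (q₂ - 1/2) < 0) :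
    ell q₁ c₁ c₂ ≤ Real.logb 2 (c₁ + c₂ : ℕ) := by
  push_neg at hns
  have hc₁R : (1:ℝ) ≤ (c₁:ℝ) := by exact_mod_cast hc₁
  have hc₂R : (1:ℝ) ≤ (c₂:ℝ) := by exact_mod_cast hc₂
  have hc₁p : (0:ℝ) < (c₁:ℝ) := by linarith
  have hc₂p : (0:ℝ) < (c₂:ℝ) := by linarith
  unfold ell at hord ⊢
  set a := Real.logb 2 (c₁:ℝ) with ha
  set b := Real.logb 2 (c₂:ℝ) with hb
  have hord' : (a - b) * (q₁ + q₂ - 1) ≤ 0 := by nlinarith [hord]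
  have hq : (q₁ - 1/2) * ((c₁:ℝ) - c₂) ≤ 0 := by
    rcases lt_trichotomy q₁ (1/2) with h | h | h
    · have hq₂ : q₂ ≤ 1/2 := by nlinarith
      have hab : b ≤ a := by nlinarith
      have : (c₂:ℝ) ≤ c₁ := by
        by_contra hcon
        push_neg at hcon
        have := Real.logb_lt_logb (by norm_num : (1:ℝ) < 2) hc₁p hcon
        rw [← ha, ← hb] at this; linarith
      nlinarith
    · simp [h]
    · have hq₂ : 1/2 ≤ q₂ := by nlinarith
      have hab : a ≤ b := by nlinarith
      have : (c₁:ℝ) ≤ c₂ := by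
        by_contra hcon
        push_neg at hcon
        have := Real.logb_lt_logb (by norm_num : (1:ℝ) < 2) hc₂p hcon
        rw [← ha, ← hb] at this; linarith
      nlinarith
  set m := q₁ * (c₁:ℝ) + (1 - q₁) * c₂ with hm
  have hmp : (1:ℝ) ≤ m := by nlinarith
  have hm0 : (0:ℝ) < m := by linarith
  have hconc : q₁ * a + (1 - q₁) * b ≤ Real.logb 2 m := by
    have hcc := (StrictConcaveOn.concaveOn strictConcaveOn_log_Ioi).2
      (Set.mem_Ioi.2 hc₁p) (Set.mem_Ioi.2 hc₂p)
      h0 (by linarith : (0:ℝ) ≤ 1 - q₁) (by ring)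
    simp only [smul_eq_mul] at hcc
    have hlog2 : (0:ℝ) < Real.log 2 := Real.log_pos (by norm_num)
    calc q₁ * a + (1 - q₁) * b
        = (q₁ * Real.log c₁ + (1 - q₁) * Real.log c₂) / Real.log 2 := by
          rw [ha, hb, Real.logb, Real.logb]; ring
      _ ≤ Real.log m / Real.log 2 := by gcongr
      _ = Real.logb 2 m := rfl
  have hm2 : m ≤ ((c₁:ℝ) + c₂) / 2 := by nlinarith
  have hlast : Real.logb 2 m ≤ Real.logb 2 ((c₁:ℝ) + c₂) - 1 := by
    have h₁ : Real.logb 2 m ≤ Real.logb 2 (((c₁:ℝ) + c₂) / 2) :=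
      Real.logb_le_logb_of_le (by norm_num) hm0 hm2
    have h₂ : Real.logb 2 (((c₁:ℝ) + c₂) / 2) = Real.logb 2 ((c₁:ℝ) + c₂) - 1 := by
      rw [Real.logb_div (by positivity) (by norm_num), Real.logb_self_eq_one (by norm_num)]
    linarith
  have hcast : ((c₁ + c₂ : ℕ) : ℝ) = (c₁:ℝ) + c₂ := by push_cast; ring
  rw [hcast]
  nlinarith [hconc, hlast]

/-- Trivial bound at any internal node whose subtrees satisfy the log bound. -/
lemma max_bound (q₁ : ℝ) (c₁ c₂ : ℕ) (hc₁ : 1 ≤ c₁) (hc₂ : 1 ≤ c₂)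
    (h0 : 0 ≤ q₁) (h1 : q₁ ≤ 1) :
    q₁ * Real.logb 2 c₁ + (1 - q₁) * Real.logb 2 c₂ ≤ Real.logb 2 (c₁ + c₂ : ℕ) := by
  have hc₁R : (1:ℝ) ≤ (c₁:ℝ) := by exact_mod_cast hc₁
  have hc₂R : (1:ℝ) ≤ (c₂:ℝ) := by exact_mod_cast hc₂
  have hcast : ((c₁ + c₂ : ℕ) : ℝ) = (c₁:ℝ) + c₂ := by push_cast; ring
  have h₁ : Real.logb 2 (c₁:ℝ) ≤ Real.logb 2 ((c₁:ℝ) + c₂) :=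
    Real.logb_le_logb_of_le (by norm_num) (by linarith) (by linarith)
  have h₂ : Real.logb 2 (c₂:ℝ) ≤ Real.logb 2 ((c₁:ℝ) + c₂) :=
    Real.logb_le_logb_of_le (by norm_num) (by linarith) (by linarith)
  rw [hcast]
  nlinarith

lemma card_node (q₁ q₂ : ℝ) (l r : HuffTree) (hd : Disjoint l.idxSet r.idxSet) :
    (node q₁ q₂ l r).idxSet.card = l.idxSet.card + r.idxSet.card := by
  simp [idxSet, Finset.card_union_of_disjoint hd]

/-- Lemma 4: with no special nodes, `L ≤ log₂ |Λ|`. -/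
lemma expDepth_le_of_no_special (t : HuffTree) (hwf : t.WF) (hsp : t.specialCount = 0) :
    t.expDepth ≤ Real.logb 2 t.idxSet.card := by
  induction t with
  | leaf i => simp [expDepth, idxSet]
  | node q₁ q₂ l r ihl ihr =>
    obtain ⟨hdisj, h0, h1, h0', h1', hord, hwl, hwr⟩ := hwf
    simp only [specialCount, Nat.add_eq_zero] at hsp
    obtain ⟨⟨hs, hsl⟩, hsr⟩ := hsp
    have hns : ¬ (q₁ - 1/2) * (q₂ - 1/2) < 0 := by
      intro h
      have := hs
      simp only [ite_eq_right_iff, one_ne_zero] at this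
      exact this h
    have hL₁ := ihl hwl hsl
    have hL₂ := ihr hwr hsr
    have hkey := key_ineq q₁ q₂ l.idxSet.card r.idxSet.card
      l.one_le_card r.one_le_card h0 h1 h0' h1' hord hns
    rw [card_node q₁ q₂ l r hdisj]
    unfold ell at hkey
    show q₁ * (1 + l.expDepth) + (1 - q₁) * (1 + r.expDepth) ≤ _
    nlinarith [hL₁, hL₂, hkey]

/-- Theorem 5 body: with at most one special node, `L ≤ log₂ |Λ| + 1`. -/
lemma expDepth_le_of_special_le_one (t : HuffTree) (hwf : t.WF) (hsp : t.specialCount ≤ 1) :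
    t.expDepth ≤ Real.logb 2 t.idxSet.card + 1 := by
  induction t with
  | leaf i =>
    simp [expDepth, idxSet]
  | node q₁ q₂ l r ihl ihr =>
    obtain ⟨hdisj, h0, h1, h0', h1', hord, hwl, hwr⟩ := hwf
    simp only [specialCount] at hsp
    rw [card_node q₁ q₂ l r hdisj]
    show q₁ * (1 + l.expDepth) + (1 - q₁) * (1 + r.expDepth) ≤ _
    by_cases hsl : l.specialCount = 0
    · by_cases hsr : r.specialCount = 0
      · -- both subtrees have no special node
        have hL₁ := expDepth_le_of_no_special l hwl hsl
        have hL₂ := expDepth_le_of_no_special r hwr hsr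
        have hmax := max_bound q₁ l.idxSet.card r.idxSet.card l.one_le_card r.one_le_card h0 h1
        nlinarith [hL₁, hL₂, hmax]
      · -- special node in the right subtree: this node non-special, left non-special
        have hr1 : 1 ≤ r.specialCount := Nat.one_le_iff_ne_zero.mpr hsr
        have hns : ¬ (q₁ - 1/2) * (q₂ - 1/2) < 0 := by
          intro h; simp only [if_pos h] at hsp; omega
        have hsr1 : r.specialCount ≤ 1 := by
          by_cases h : (q₁ - 1/2) * (q₂ - 1/2) < 0 <;> simp [h] at hsp <;> omega
        have hL₁ := expDepth_le_of_no_special l hwl hsl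
        have hL₂ := ihr hwr hsr1
        have hkey := key_ineq q₁ q₂ l.idxSet.card r.idxSet.card
          l.one_le_card r.one_le_card h0 h1 h0' h1' hord hns
        unfold ell at hkey
        nlinarith [hL₁, hL₂, hkey]
    · -- special node in the left subtree
      have hl1 : 1 ≤ l.specialCount := Nat.one_le_iff_ne_zero.mpr hsl
      have hns : ¬ (q₁ - 1/2) * (q₂ - 1/2) < 0 := by
        intro h; simp only [if_pos h] at hsp; omega
      have hsl1 : l.specialCount ≤ 1 := by
        by_cases h : (q₁ - 1/2) * (q₂ - 1/2) < 0 <;> simp [h] at hsp <;> omega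
      have hsr : r.specialCount = 0 := by
        by_cases h : (q₁ - 1/2) * (q₂ - 1/2) < 0 <;> simp [h] at hsp <;> omega
      have hL₁ := ihl hwl hsl1
      have hL₂ := expDepth_le_of_no_special r hwr hsr
      have hkey := key_ineq q₁ q₂ l.idxSet.card r.idxSet.card
        l.one_le_card r.one_le_card h0 h1 h0' h1' hord hns
      unfold ell at hkey
      nlinarith [hL₁, hL₂, hkey]

end HuffTree

/-- Theorem 5 of the paper: if the Huffman sampling tree has at most one special
node, then the expected number of samples needed to locate one nonzero component
is at most `log₂ n + 1`, where `n = |Λ|` is the size of the root index set, `n ≥ 2`. -/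
theorem huffman_expDepth_le_logb_add_one (t : HuffTree)
    (hwf : t.WF) (hsp : t.specialCount ≤ 1) (hn : 2 ≤ t.idxSet.card) :
    t.expDepth ≤ Real.logb 2 t.idxSet.card + 1 :=
  HuffTree.expDepth_le_of_special_le_one t hwf hsp
end

section
/- In a Huffman tree built by the greedy merging procedure—start with nodes of weights q₁, …, q_n ∈ [0,1], and repeatedly replace the two nodes of smallest weight q_i, q_j by a single node whose weight q' satisfies q' ≥ max(q_i, q_j)—there is at most one internal node whose two children have weights on strictly opposite sides of 1/2; i.e., at most one internal node with children weights a, b satisfying (a - 1/2)(b - 1/2) < 0. -/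
/-- A run of the greedy Huffman merging procedure on a multiset of weights,
counting the number of "special" merges. `HuffmanRun s k` means: starting from
the multiset of weights `s`, the procedure (which repeatedly replaces the two
smallest weights `a ≤ b` by a single weight `q` with `max a b ≤ q ≤ 1`)
can terminate, performing exactly `k` merges whose two merged weights `a, b`
lie on strictly opposite sides of `1/2`, i.e. `(a - 1/2)(b - 1/2) < 0`. -/
inductive HuffmanRun : Multiset ℝ → ℕ → Prop
  | single (q : ℝ) : HuffmanRun {q} 0
  | step (a b q : ℝ) (s : Multiset ℝ) (k : ℕ)
      (hab : a ≤ b) (hmin : ∀ c ∈ s, b ≤ c)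
      (hq : max a b ≤ q) (hq1 : q ≤ 1)
      (hrest : HuffmanRun (q ::ₘ s) k) :
      HuffmanRun (a ::ₘ b ::ₘ s)
        (k + if (a - 1 / 2) * (b - 1 / 2) < 0 then 1 else 0)

/-- If all weights are strictly above `1/2`, no merge is ever special. -/
lemma huffman_no_special (s : Multiset ℝ) (k : ℕ) (h : HuffmanRun s k)
    (hs : ∀ x ∈ s, 1 / 2 < x) : k = 0 := by
  induction h with
  | single q => rfl
  | step a b q s k hab hmin hq hq1 hrest ih =>
    have ha : 1 / 2 < a := hs a (by simp)
    have hb : 1 / 2 < b := hs b (by simp)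
    have hns : ¬ (a - 1 / 2) * (b - 1 / 2) < 0 := by nlinarith
    rw [if_neg hns]
    have hk := ih (fun x hx => by
      rcases Multiset.mem_cons.mp hx with rfl | hx
      · exact lt_of_lt_of_le hb (le_trans (le_max_right a b) hq)
      · exact hs x (by simp [hx]))
    omega

/-- In a Huffman tree built by greedily merging the two smallest weights
`q₁, …, q_n ∈ [0,1]` (the merged node receiving a weight at least the maximum of
the two merged weights), at most one internal node is special, i.e. has its two
children's weights on strictly opposite sides of `1/2`. -/
theorem huffman_at_most_one_special (s : Multiset ℝ) (k : ℕ)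
    (hs : ∀ x ∈ s, 0 ≤ x ∧ x ≤ 1) (hrun : HuffmanRun s k) : k ≤ 1 := by
  revert hs
  induction hrun with
  | single q => intro _; omega
  | step a b q s k hab hmin hq hq1 hrest ih =>
    intro hs
    have ha := hs a (by simp)
    by_cases hsp : (a - 1 / 2) * (b - 1 / 2) < 0
    · rw [if_pos hsp]
      have hb2 : 1 / 2 < b := by nlinarith
      have hk : k = 0 := huffman_no_special _ _ hrest (fun x hx => by
        rcases Multiset.mem_cons.mp hx with rfl | hx
        · exact lt_of_lt_of_le hb2 (le_trans (le_max_right a b) hq)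
        · exact lt_of_lt_of_le hb2 (hmin x hx))
      omega
    · rw [if_neg hsp]
      have hk := ih (fun x hx => by
        rcases Multiset.mem_cons.mp hx with rfl | hx
        · exact ⟨le_trans ha.1 (le_trans (le_max_left a b) hq), hq1⟩
        · exact hs x (by simp [hx]))
      omega
end

section
/- Let X be a 1-sparse random vector in ℝⁿ, i.e., X = α·e_I for a random index I ∈ {1,…,n} with distribution (p₁,…,p_n) and random nonzero scalar α, where e_i is the i-th canonical basis vector. Any adaptive sampling algorithm that determines the index I using binary sampling vectors a ∈ {0,1}ⁿ (observing only the values ⟨a, X⟩, where each a may depend on previous observations) induces a binary prefix code on {1,…,n} whose codeword length for index i equals the number of samples used when I = i. Consequently, the expected number of samples of any such algorithm is at least the expected length of an optimal (Huffman) prefix code for the distribution (p₁,…,p_n), and the Huffman-tree-based sampling algorithm achieves this minimum. -/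
open Finset

/-- An adaptive binary-sampling algorithm for determining the support index of a
1-sparse signal `x = α eᵢ` (`α ≠ 0`) in `ℝⁿ`. Each step queries a binary vector
`a ∈ {0,1}ⁿ`, identified with the set `S` of its nonzero coordinates; since
`⟨a, α eᵢ⟩ ≠ 0 ↔ i ∈ S`, the algorithm branches on membership `i ∈ S` and its
choices may depend on all previous observations (the tree structure). -/
inductive SamplingAlg (n : ℕ) : Type
  | result (i : Fin n) : SamplingAlg n
  | query (S : Finset (Fin n)) (yes no : SamplingAlg n) : SamplingAlg n

namespace SamplingAlg

/-- The index output by the algorithm when the unknown signal is `α eᵢ`, `α ≠ 0`. -/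
def output {n : ℕ} : SamplingAlg n → Fin n → Fin n
  | result j, _ => j
  | query S yes no, i => if i ∈ S then yes.output i else no.output i

/-- The number of samples (measurements) used when the unknown signal is `α eᵢ`. -/
def numSamples {n : ℕ} : SamplingAlg n → Fin n → ℕ
  | result _, _ => 0
  | query S yes no, i =>
      1 + (if i ∈ S then yes.numSamples i else no.numSamples i)

/-- The algorithm correctly determines the support index of every 1-sparse signal. -/
def Correct {n : ℕ} (A : SamplingAlg n) : Prop := ∀ i, A.output i = i

end SamplingAlg

/-- `c` is a binary prefix code: no codeword is a prefix of another. -/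
def IsPrefixCode {n : ℕ} (c : Fin n → List Bool) : Prop :=
  ∀ i j, i ≠ j → ¬ (c i) <+: (c j)

namespace SamplingAlg

/-- The codeword (transcript of observed bits) for index `i`. -/
def codeword {n : ℕ} : SamplingAlg n → Fin n → List Bool
  | result _, _ => []
  | query S yes no, i =>
      if i ∈ S then true :: yes.codeword i else false :: no.codeword i

lemma codeword_length {n : ℕ} (A : SamplingAlg n) (i : Fin n) :
    (A.codeword i).length = A.numSamples i := by
  induction A with
  | result j => rfl
  | query S yes no ihy ihn =>
      by_cases h : i ∈ S <;> simp [codeword, numSamples, h, ihy, ihn, Nat.add_comm]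

lemma output_eq_of_codeword_prefix {n : ℕ} (A : SamplingAlg n) (i j : Fin n)
    (h : A.codeword i <+: A.codeword j) : A.output i = A.output j := by
  induction A with
  | result k => rfl
  | query S yes no ihy ihn =>
      by_cases hi : i ∈ S <;> by_cases hj : j ∈ S <;>
        simp_all [codeword, output, List.cons_prefix_cons]

end SamplingAlg

open SamplingAlg in
lemma codeword_isPrefixCode {n : ℕ} (A : SamplingAlg n) (hA : A.Correct) :
    IsPrefixCode A.codeword := by
  intro i j hij hpre
  exact hij (by rw [← hA i, ← hA j]; exact A.output_eq_of_codeword_prefix i j hpre)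

/-- Build a sampling algorithm from a prefix code, descending the code tree. -/
noncomputable def buildAlg {n : ℕ} (i₀ : Fin n) (c : Fin n → List Bool) :
    ℕ → List Bool → SamplingAlg n
  | 0, w => .result (if h : ∃ i, c i = w then h.choose else i₀)
  | k + 1, w =>
      if h : ∃ i, c i = w then .result h.choose
      else .query (Finset.univ.filter (fun i => (w ++ [true]) <+: c i))
            (buildAlg i₀ c k (w ++ [true])) (buildAlg i₀ c k (w ++ [false]))

lemma buildAlg_spec {n : ℕ} (i₀ : Fin n) (c : Fin n → List Bool)
    (hc : IsPrefixCode c) :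
    ∀ (k : ℕ) (w : List Bool) (i : Fin n), w <+: c i → (c i).length ≤ w.length + k →
      (buildAlg i₀ c k w).output i = i ∧
      (buildAlg i₀ c k w).numSamples i + w.length ≤ (c i).length := by
  have choose_eq : ∀ (w : List Bool) (i : Fin n) (h : ∃ j, c j = w),
      w <+: c i → h.choose = i := by
    intro w i h hpre
    by_contra hne
    exact hc _ _ hne (by rw [h.choose_spec]; exact hpre)
  intro k
  induction k with
  | zero =>
      intro w i hpre hlen
      have hw : c i = w := (List.IsPrefix.eq_of_length hpre
        (le_antisymm hpre.length_le hlen)).symm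
      have h : ∃ j, c j = w := ⟨i, hw⟩
      refine ⟨?_, by simp [buildAlg, SamplingAlg.numSamples, hw]⟩
      simp only [buildAlg, SamplingAlg.output, dif_pos h]
      exact choose_eq w i h hpre
  | succ k ih =>
      intro w i hpre hlen
      by_cases h : ∃ j, c j = w
      · have hi := choose_eq w i h hpre
        have hw : c i = w := hi ▸ h.choose_spec
        simp [buildAlg, dif_pos h, SamplingAlg.output, SamplingAlg.numSamples, hi, hw]
      · -- w is a strict prefix of c i
        have hne : c i ≠ w := fun hw => h ⟨i, hw⟩
        obtain ⟨t, ht⟩ := hpre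
        have htne : t ≠ [] := by rintro rfl; simp at ht; exact hne ht.symm
        obtain ⟨b, t', rfl⟩ := List.exists_cons_of_ne_nil htne
        have hprefb : (w ++ [b]) <+: c i := ⟨t', by simp [← ht]⟩
        have hmem : (i ∈ Finset.univ.filter (fun i => (w ++ [true]) <+: c i)) ↔ b = true := by
          simp only [Finset.mem_filter, Finset.mem_univ, true_and]
          constructor
          · intro hp
            rcases hp with ⟨s, hs⟩
            have h2 : w ++ (b :: t') = w ++ (true :: s) := by
              rw [ht, ← hs]; simp
            simpa using congrArg List.head? (List.append_cancel_left h2)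
          · rintro rfl; exact hprefb
        cases b with
        | true =>
            have hmem' : i ∈ Finset.univ.filter (fun i => (w ++ [true]) <+: c i) := hmem.mpr rfl
            have hrec := ih (w ++ [true]) i hprefb (by simp only [List.length_append, List.length_singleton]; omega)
            refine ⟨?_, ?_⟩
            · simp only [buildAlg, dif_neg h, SamplingAlg.output, if_pos hmem']
              exact hrec.1
            · simp only [buildAlg, dif_neg h, SamplingAlg.numSamples, if_pos hmem']
              have := hrec.2
              simp only [List.length_append, List.length_singleton] at this
              omega
        | false =>
            have hmem' : i ∉ Finset.univ.filter (fun i => (w ++ [true]) <+: c i) := by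
              simp [hmem]
            have hrec := ih (w ++ [false]) i hprefb (by simp only [List.length_append, List.length_singleton]; omega)
            refine ⟨?_, ?_⟩
            · simp only [buildAlg, dif_neg h, SamplingAlg.output, if_neg hmem']
              exact hrec.1
            · simp only [buildAlg, dif_neg h, SamplingAlg.numSamples, if_neg hmem']
              have := hrec.2
              simp only [List.length_append, List.length_singleton] at this
              omega

/-- Theorem 1 of the paper. For a 1-sparse random vector `X = α e_I` with index
distribution `p` on `{1,…,n}`:
(1) every correct adaptive binary-sampling algorithm induces a binary prefix
code whose codeword length for index `i` is the number of samples used on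
`α eᵢ`; consequently its expected number of samples is the expected length of a
prefix code; and
(2) the Huffman-tree-based algorithm achieves the minimum: there is a correct
algorithm whose expected number of samples is at most that of every correct
algorithm and at most the expected length of every binary prefix code. -/
theorem huffman_sampling_optimal_one_sparse (n : ℕ) (hn : 1 ≤ n)
    (p : Fin n → ℝ) (hp0 : ∀ i, 0 ≤ p i) (hp1 : ∑ i, p i = 1) :
    (∀ A : SamplingAlg n, A.Correct →
        ∃ c : Fin n → List Bool, IsPrefixCode c ∧
          ∀ i, (c i).length = A.numSamples i)
    ∧ ∃ A : SamplingAlg n, A.Correct ∧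
        (∀ A' : SamplingAlg n, A'.Correct →
            ∑ i, p i * A.numSamples i ≤ ∑ i, p i * A'.numSamples i)
        ∧ ∀ c : Fin n → List Bool, IsPrefixCode c →
            ∑ i, p i * A.numSamples i ≤ ∑ i, p i * (c i).length := by
  classical
  have i₀ : Fin n := ⟨0, hn⟩
  refine ⟨fun A hA => ⟨A.codeword, codeword_isPrefixCode A hA,
      fun i => A.codeword_length i⟩, ?_⟩
  set cost : SamplingAlg n → ℝ := fun A => ∑ i, p i * (A.numSamples i : ℝ) with hcostdef
  have cost_nonneg : ∀ A, 0 ≤ cost A := fun A =>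
    Finset.sum_nonneg fun i _ => mul_nonneg (hp0 i) (Nat.cast_nonneg _)
  -- from any prefix code, a correct algorithm at least as good
  have fromCode : ∀ c : Fin n → List Bool, IsPrefixCode c →
      ∃ A : SamplingAlg n, A.Correct ∧ ∀ i, A.numSamples i ≤ (c i).length := by
    intro c hc
    have hb : ∀ i : Fin n, (c i).length ≤ ([] : List Bool).length +
        (Finset.univ.sup fun i => (c i).length) := by
      intro i
      simpa using Finset.le_sup (f := fun i => (c i).length) (Finset.mem_univ i)
    refine ⟨buildAlg i₀ c (Finset.univ.sup fun i => (c i).length) [], fun i =>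
      (buildAlg_spec i₀ c hc _ [] i List.nil_prefix (hb i)).1, fun i => ?_⟩
    have := (buildAlg_spec i₀ c hc _ [] i List.nil_prefix (hb i)).2
    simpa using this
  -- a baseline correct algorithm from a fixed-length code
  have hc₀ : IsPrefixCode (fun i : Fin n => List.ofFn fun j : Fin n => decide (j = i)) := by
    intro i j hij hpre
    have heq := List.IsPrefix.eq_of_length hpre (by simp)
    have h2 := congrFun (List.ofFn_injective heq) i
    simp at h2
    exact hij h2
  obtain ⟨A₀, hA₀, -⟩ := fromCode _ hc₀
  -- support of p is nonempty; minimum positive probability ε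
  have hsupp : (Finset.univ.filter fun i => 0 < p i).Nonempty := by
    by_contra hemp
    rw [Finset.not_nonempty_iff_eq_empty, Finset.filter_eq_empty_iff] at hemp
    have hz : ∀ i : Fin n, p i = 0 := fun i =>
      le_antisymm (not_lt.mp (hemp (Finset.mem_univ i))) (hp0 i)
    simp [hz] at hp1
  set ε : ℝ := (Finset.univ.filter fun i => 0 < p i).inf' hsupp p with hεdef
  have hε : 0 < ε := by
    rw [hεdef, Finset.lt_inf'_iff]
    intro i hi
    exact (Finset.mem_filter.mp hi).2
  set M : ℕ := ⌈cost A₀ / ε⌉₊ with hMdef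
  -- the set of achievable costs not exceeding cost A₀ is finite
  set Tb : Set ℝ := {t | (∃ A : SamplingAlg n, A.Correct ∧ cost A = t) ∧ t ≤ cost A₀}
    with hTbdef
  have hTbfin : Tb.Finite := by
    apply Set.Finite.subset (Set.finite_range
      (fun ℓ : Fin n → Fin (M + 1) => ∑ i, p i * ((ℓ i : ℕ) : ℝ)))
    rintro t ⟨⟨A, hA, rfl⟩, hle⟩
    have hbound : ∀ i : Fin n, 0 < p i → A.numSamples i < M + 1 := by
      intro i hpi
      have h1 : p i * (A.numSamples i : ℝ) ≤ cost A :=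
        Finset.single_le_sum (f := fun i => p i * (A.numSamples i : ℝ))
          (fun i _ => mul_nonneg (hp0 i) (Nat.cast_nonneg _)) (Finset.mem_univ i)
      have hεi : ε ≤ p i := Finset.inf'_le p (Finset.mem_filter.mpr ⟨Finset.mem_univ i, hpi⟩)
      have h2 : (A.numSamples i : ℝ) ≤ cost A / p i := by
        rw [le_div_iff₀ hpi]
        linarith [h1]
      have h3 : cost A / p i ≤ cost A₀ / ε :=
        div_le_div₀ (cost_nonneg A₀) hle hε hεi
      have h4 : (A.numSamples i : ℝ) ≤ (M : ℝ) :=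
        le_trans (le_trans h2 h3) (Nat.le_ceil _)
      have h5 : A.numSamples i ≤ M := Nat.cast_le.mp h4
      omega
    refine ⟨fun i => if h : 0 < p i then ⟨A.numSamples i, hbound i h⟩ else 0, ?_⟩
    apply Finset.sum_congr rfl
    intro i _
    by_cases h : 0 < p i
    · simp [h]
    · have : p i = 0 := le_antisymm (not_lt.mp h) (hp0 i)
      simp [this]
  have hTbne : Tb.Nonempty := ⟨cost A₀, ⟨A₀, hA₀, rfl⟩, le_refl _⟩
  obtain ⟨t, ht, hmin⟩ := Set.exists_min_image Tb id hTbfin hTbne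
  obtain ⟨⟨A, hA, rfl⟩, hAle⟩ := ht
  have halg : ∀ A' : SamplingAlg n, A'.Correct → cost A ≤ cost A' := by
    intro A' hA'
    by_cases h : cost A' ≤ cost A₀
    · exact hmin _ ⟨⟨A', hA', rfl⟩, h⟩
    · exact le_trans hAle (le_of_lt (not_le.mp h))
  refine ⟨A, hA, halg, fun c hc => ?_⟩
  obtain ⟨Ac, hAc, hlen⟩ := fromCode c hc
  refine le_trans (halg Ac hAc) (Finset.sum_le_sum fun i _ => ?_)
  exact mul_le_mul_of_nonneg_left (Nat.cast_le.mpr (hlen i)) (hp0 i)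
end

section
/- For nonempty finite disjoint sets Λ₁, Λ₂ with union Λ and |Λ₁| ≤ |Λ₂|, and any q ∈ [0,1] with q ≤ 1/2: if |Λ₂|/|Λ| ≥ 1/2, then 2·|Λ₂|^q·|Λ₁|^{1−q} ≤ |Λ|; equivalently, q(log₂|Λ₂| + 1) + (1−q)(log₂|Λ₁| + 1) ≤ log₂|Λ|. -/
open Real

/-- Concrete computation in the proof of Lemma 2: for nonempty disjoint finite
sets `Λ₁, Λ₂` with union `Λ`, `|Λ₁| ≤ |Λ₂|`, `q ≤ 1/2` and `|Λ₂|/|Λ| ≥ 1/2`,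
one has `2|Λ₂|^q |Λ₁|^{1-q} ≤ |Λ|` and equivalently
`q(log₂|Λ₂| + 1) + (1-q)(log₂|Λ₁| + 1) ≤ log₂|Λ|`. -/
theorem huffman_lemma2_computation (Λ Λ₁ Λ₂ : Finset ℕ) (q : ℝ)
    (h₁ : Λ₁.Nonempty) (h₂ : Λ₂.Nonempty) (hdisj : Disjoint Λ₁ Λ₂)
    (hunion : Λ₁ ∪ Λ₂ = Λ) (hcard : Λ₁.card ≤ Λ₂.card)
    (hq0 : 0 ≤ q) (hq : q ≤ 1 / 2)
    (hhalf : (1 : ℝ) / 2 ≤ (Λ₂.card : ℝ) / (Λ.card : ℝ)) :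
    2 * (Λ₂.card : ℝ) ^ q * (Λ₁.card : ℝ) ^ (1 - q) ≤ (Λ.card : ℝ)
    ∧ q * (Real.logb 2 Λ₂.card + 1) + (1 - q) * (Real.logb 2 Λ₁.card + 1)
        ≤ Real.logb 2 Λ.card := by
  set a : ℝ := (Λ₁.card : ℝ) with ha
  set b : ℝ := (Λ₂.card : ℝ) with hb
  have ha1 : (1 : ℝ) ≤ a := by
    have : 1 ≤ Λ₁.card := Finset.card_pos.mpr h₁
    rw [ha]; exact_mod_cast this
  have hb1 : (1 : ℝ) ≤ b := by
    have : 1 ≤ Λ₂.card := Finset.card_pos.mpr h₂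
    rw [hb]; exact_mod_cast this
  have ha0 : 0 < a := lt_of_lt_of_le one_pos ha1
  have hb0 : 0 < b := lt_of_lt_of_le one_pos hb1
  have hab : a ≤ b := by rw [ha, hb]; exact_mod_cast hcard
  have hn : (Λ.card : ℝ) = a + b := by
    rw [← hunion, Finset.card_union_of_disjoint hdisj]
    push_cast
    ring
  -- key factorization
  have e1 : b ^ q = b ^ ((1:ℝ)/2) * b ^ (q - 1/2) := by
    rw [← Real.rpow_add hb0]; norm_num
  have e2 : a ^ (1 - q) = a ^ ((1:ℝ)/2) * a ^ ((1:ℝ)/2 - q) := by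
    rw [← Real.rpow_add ha0]; congr 1; ring
  have e3 : (a / b) ^ ((1:ℝ)/2 - q) = a ^ ((1:ℝ)/2 - q) * b ^ (q - 1/2) := by
    rw [Real.div_rpow ha0.le hb0.le, div_eq_mul_inv, ← Real.rpow_neg hb0.le]
    congr 1; ring
  have hfact : b ^ q * a ^ (1 - q) = b ^ ((1:ℝ)/2) * a ^ ((1:ℝ)/2) * (a / b) ^ ((1:ℝ)/2 - q) := by
    rw [e1, e2, e3]; ring
  have ht1 : (a / b) ^ ((1:ℝ)/2 - q) ≤ 1 :=
    Real.rpow_le_one (by positivity) (div_le_one_of_le₀ hab hb0.le) (by linarith)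
  have hkey : b ^ q * a ^ (1 - q) ≤ b ^ ((1:ℝ)/2) * a ^ ((1:ℝ)/2) := by
    rw [hfact]
    exact mul_le_of_le_one_right (by positivity) ht1
  have hsq : b ^ ((1:ℝ)/2) = Real.sqrt b := (Real.sqrt_eq_rpow b).symm
  have hsqa : a ^ ((1:ℝ)/2) = Real.sqrt a := (Real.sqrt_eq_rpow a).symm
  have hamgm : 2 * (Real.sqrt b * Real.sqrt a) ≤ a + b := by
    nlinarith [Real.sq_sqrt ha0.le, Real.sq_sqrt hb0.le, sq_nonneg (Real.sqrt a - Real.sqrt b),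
      Real.sqrt_nonneg a, Real.sqrt_nonneg b]
  have hfirst : 2 * b ^ q * a ^ (1 - q) ≤ (Λ.card : ℝ) := by
    rw [hn, mul_assoc]
    calc 2 * (b ^ q * a ^ (1 - q)) ≤ 2 * (b ^ ((1:ℝ)/2) * a ^ ((1:ℝ)/2)) := by linarith
      _ = 2 * (Real.sqrt b * Real.sqrt a) := by rw [hsq, hsqa]
      _ ≤ a + b := hamgm
  refine ⟨hfirst, ?_⟩
  -- take log base 2
  have hpos : 0 < 2 * b ^ q * a ^ (1 - q) := by positivity
  have hlog := Real.logb_le_logb_of_le (by norm_num : (1:ℝ) < 2) hpos hfirst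
  have hexp : Real.logb 2 (2 * b ^ q * a ^ (1 - q))
      = q * (Real.logb 2 b + 1) + (1 - q) * (Real.logb 2 a + 1) := by
    rw [Real.logb_mul (by positivity) (by positivity),
      Real.logb_mul (by norm_num) (by positivity)]
    unfold Real.logb
    rw [Real.log_rpow hb0, Real.log_rpow ha0]
    have h2 : Real.log 2 ≠ 0 := ne_of_gt (Real.log_pos (by norm_num))
    field_simp
    ring
  rw [hexp] at hlog
  exact hlog
end
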